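/- Under the Markov assumption X_S − X_0 − X_T for disjoint S,T ⊆ L, for any S ⊆ L one has v(S) = I(X_S; X_0) − I(X_S; X_{L\S}), where v(S) = I(X_S; X_0 | X_{L\S}). -/

import Mathlib

noncomputable section
open Finset
open scoped Classical BigOperators

/-- Probability of an event under a pmf on a finite sample space. -/
def Pr {Ω : Type} [Fintype Ω] (p : Ω → ℝ) (E : Ω → Prop) : ℝ :=
  ∑ ω : Ω, if E ω then p ω else 0

/-- `p` is a probability mass function. -/
def IsPMF {Ω : Type} [Fintype Ω] (p : Ω → ℝ) : Prop :=
  (∀ ω, 0 ≤ p ω) ∧ (∑ ω : Ω, p ω) = 1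

/-- Shannon entropy of a finitely-valued random variable `X` under pmf `p`. -/
def ent {Ω α : Type} [Fintype Ω] [Fintype α] (p : Ω → ℝ) (X : Ω → α) : ℝ :=
  -∑ a : α, Pr p (fun ω => X ω = a) * Real.log (Pr p (fun ω => X ω = a))

/-- Conditional Shannon entropy `H(X|Y)`. -/
def condEnt {Ω α β : Type} [Fintype Ω] [Fintype α] [Fintype β]
    (p : Ω → ℝ) (X : Ω → α) (Y : Ω → β) : ℝ :=
  ent p (fun ω => (X ω, Y ω)) - ent p Y

/-- Mutual information `I(X;Y)`. -/
def mi {Ω α β : Type} [Fintype Ω] [Fintype α] [Fintype β]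
    (p : Ω → ℝ) (X : Ω → α) (Y : Ω → β) : ℝ :=
  ent p X + ent p Y - ent p (fun ω => (X ω, Y ω))

/-- Conditional mutual information `I(X;Y|Z)`. -/
def cmi {Ω α β γ : Type} [Fintype Ω] [Fintype α] [Fintype β] [Fintype γ]
    (p : Ω → ℝ) (X : Ω → α) (Y : Ω → β) (Z : Ω → γ) : ℝ :=
  ent p (fun ω => (X ω, Z ω)) + ent p (fun ω => (Y ω, Z ω))
    - ent p (fun ω => (X ω, Y ω, Z ω)) - ent p Z

/-- `X` and `Y` are conditionally independent given `Z` (Markov chain `X - Z - Y`). -/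
def CondIndep {Ω α β γ : Type} [Fintype Ω] [Fintype α] [Fintype β] [Fintype γ]
    (p : Ω → ℝ) (X : Ω → α) (Y : Ω → β) (Z : Ω → γ) : Prop :=
  ∀ (a : α) (b : β) (c : γ),
    Pr p (fun ω => X ω = a ∧ Y ω = b ∧ Z ω = c) * Pr p (fun ω => Z ω = c)
      = Pr p (fun ω => X ω = a ∧ Z ω = c) * Pr p (fun ω => Y ω = b ∧ Z ω = c)

/-- The tuple random variable `X_S = (X_l)_{l ∈ S}`. -/
def XS {Ω L 𝒳 : Type} [Fintype Ω] (X : L → Ω → 𝒳) (S : Finset L) :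
    Ω → (S → 𝒳) :=
  fun ω i => X i ω

/-- The value function of the secret-key generation game:
`v(S) = I(X_S; X_0 | X_{L\S})`. -/
def vGame {Ω L 𝒳 β : Type} [Fintype Ω] [Fintype L] [DecidableEq L] [Fintype 𝒳] [Fintype β]
    (p : Ω → ℝ) (X : L → Ω → 𝒳) (X0 : Ω → β) (S : Finset L) : ℝ :=
  cmi p (XS X S) X0 (XS X Sᶜ)

/-! Under the Markov chain `X_S - X_0 - X_{L∖S}`, for each value `c` of `X_0` the joint mass of
`(X_S, X_{L∖S})` on the event `X_0 = c` is a rank-one matrix, and on a rank-one matrix `∑ -u log u` splits into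
the entropies of its row and column marginals minus that of its total mass. Summing over `c` gives
`H(X_S, X_0, X_{L∖S}) = H(X_S, X_0) + H(X_0, X_{L∖S}) - H(X_0)`, which is exactly the difference
between the two sides once `v`, `I` are expanded into entropies. -/

open Real

section Probability

variable {Ω : Type} [Fintype Ω] (p : Ω → ℝ)

lemma Pr_congr {E F : Ω → Prop} (h : ∀ ω, E ω ↔ F ω) : Pr p E = Pr p F :=
  Finset.sum_congr rfl fun ω _ => if_congr (h ω) rfl rfl

lemma Pr_nonneg {p : Ω → ℝ} (hp : ∀ ω, 0 ≤ p ω) (E : Ω → Prop) : 0 ≤ Pr p E :=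
  Finset.sum_nonneg fun ω _ => by split_ifs <;> simp [hp ω]

lemma Pr_eq_sum_Pr_and {β : Type} [Fintype β] (Y : Ω → β) (E : Ω → Prop) :
    Pr p E = ∑ b : β, Pr p (fun ω => E ω ∧ Y ω = b) := by
  unfold Pr
  rw [Finset.sum_comm]
  refine Finset.sum_congr rfl fun ω _ => ?_
  by_cases h : E ω <;> simp [h]

variable {α β γ : Type} [Fintype α] [Fintype β] [Fintype γ]

lemma ent_eq_sum_negMulLog (X : Ω → α) :
    ent p X = ∑ a, negMulLog (Pr p (fun ω => X ω = a)) := by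
  simp only [ent, negMulLog, neg_mul, Finset.sum_neg_distrib]

lemma ent_pair (X : Ω → α) (Y : Ω → β) :
    ent p (fun ω => (X ω, Y ω))
      = ∑ a, ∑ b, negMulLog (Pr p (fun ω => X ω = a ∧ Y ω = b)) := by
  rw [ent_eq_sum_negMulLog, Fintype.sum_prod_type]
  simp only [Prod.ext_iff]

lemma ent_triple (X : Ω → α) (Y : Ω → β) (Z : Ω → γ) :
    ent p (fun ω => (X ω, Y ω, Z ω))
      = ∑ a, ∑ b, ∑ c, negMulLog (Pr p (fun ω => X ω = a ∧ Y ω = b ∧ Z ω = c)) := by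
  rw [ent_pair]
  simp only [Fintype.sum_prod_type, Prod.ext_iff]

end Probability

lemma mul_log_eq_of_mul_eq_mul {u r k T : ℝ} (hu : 0 ≤ u) (hr : u ≤ r) (hk : u ≤ k)
    (h : u * T = r * k) : u * log u = u * log r + u * log k - u * log T := by
  rcases hu.eq_or_lt with rfl | hu
  · simp
  have hT : 0 < T := pos_of_mul_pos_right (h ▸ mul_pos (hu.trans_le hr) (hu.trans_le hk)) hu.le
  have hlog := congrArg log h
  rw [log_mul hu.ne' hT.ne', log_mul (hu.trans_le hr).ne' (hu.trans_le hk).ne'] at hlog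
  rw [show log u = log r + log k - log T by linarith]
  ring

lemma sum_negMulLog_of_mul_sum_eq {α β : Type} [Fintype α] [Fintype β]
    (u : α → β → ℝ) (hu : ∀ a b, 0 ≤ u a b)
    (h : ∀ a b, u a b * (∑ a', ∑ b', u a' b') = (∑ b', u a b') * (∑ a', u a' b)) :
    ∑ a, ∑ b, negMulLog (u a b)
      = ∑ a, negMulLog (∑ b, u a b) + ∑ b, negMulLog (∑ a, u a b)
        - negMulLog (∑ a, ∑ b, u a b) := by
  have hpoint : ∀ a b, u a b * log (u a b) = u a b * log (∑ b', u a b')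
      + u a b * log (∑ a', u a' b) - u a b * log (∑ a', ∑ b', u a' b') := fun a b =>
    mul_log_eq_of_mul_eq_mul (hu a b)
      (Finset.single_le_sum (fun b' _ => hu a b') (Finset.mem_univ b))
      (Finset.single_le_sum (fun a' _ => hu a' b) (Finset.mem_univ a)) (h a b)
  simp only [negMulLog, neg_mul, Finset.sum_neg_distrib, hpoint, Finset.sum_sub_distrib,
    Finset.sum_add_distrib, ← Finset.sum_mul]
  rw [Finset.sum_comm (f := fun a b => u a b * log (∑ a', u a' b))]
  simp only [← Finset.sum_mul]
  ring

section Markov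

variable {Ω α β γ : Type} [Fintype Ω] [Fintype α] [Fintype β] [Fintype γ]

lemma ent_triple_of_condIndep {p : Ω → ℝ} (hp : ∀ ω, 0 ≤ p ω)
    {U : Ω → α} {V : Ω → γ} {W : Ω → β} (h : CondIndep p U W V) :
    ent p (fun ω => (U ω, V ω, W ω))
      = ent p (fun ω => (U ω, V ω)) + ent p (fun ω => (V ω, W ω)) - ent p V := by
  set u : γ → α → β → ℝ := fun c a b => Pr p (fun ω => U ω = a ∧ W ω = b ∧ V ω = c)
  have hUV : ∀ a c, Pr p (fun ω => U ω = a ∧ V ω = c) = ∑ b, u c a b := fun a c => by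
    rw [Pr_eq_sum_Pr_and p W]
    exact Finset.sum_congr rfl fun b _ => Pr_congr p fun ω => by tauto
  have hWV : ∀ b c, Pr p (fun ω => W ω = b ∧ V ω = c) = ∑ a, u c a b := fun b c => by
    rw [Pr_eq_sum_Pr_and p U]
    exact Finset.sum_congr rfl fun a _ => Pr_congr p fun ω => by tauto
  have hVW : ∀ c b, Pr p (fun ω => V ω = c ∧ W ω = b) = ∑ a, u c a b := fun c b =>
    (Pr_congr p fun ω => and_comm).trans (hWV b c)
  have hV : ∀ c, Pr p (fun ω => V ω = c) = ∑ a, ∑ b, u c a b := fun c => by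
    rw [Pr_eq_sum_Pr_and p U]
    refine Finset.sum_congr rfl fun a _ => ?_
    rw [Pr_eq_sum_Pr_and p W]
    exact Finset.sum_congr rfl fun b _ => Pr_congr p fun ω => by tauto
  have hUVW : ∀ a c b, Pr p (fun ω => U ω = a ∧ V ω = c ∧ W ω = b) = u c a b :=
    fun a c b => Pr_congr p fun ω => by tauto
  have hfibre : ∀ c, ∑ a, ∑ b, negMulLog (u c a b)
      = ∑ a, negMulLog (∑ b, u c a b) + ∑ b, negMulLog (∑ a, u c a b)
        - negMulLog (∑ a, ∑ b, u c a b) := fun c =>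
    sum_negMulLog_of_mul_sum_eq (u c) (fun a b => Pr_nonneg hp _) fun a b => by
      simpa only [hUV, hWV, hV] using h a b c
  rw [ent_triple, ent_pair, ent_pair, ent_eq_sum_negMulLog]
  simp only [hUVW, hUV, hVW, hV]
  rw [Finset.sum_comm (f := fun a c => ∑ b, negMulLog (u c a b)),
    Finset.sum_comm (f := fun a c => negMulLog (∑ b, u c a b)), ← Finset.sum_add_distrib,
    ← Finset.sum_sub_distrib]
  exact Finset.sum_congr rfl fun c _ => hfibre c

lemma cmi_eq_mi_sub_mi_of_condIndep {p : Ω → ℝ} (hp : ∀ ω, 0 ≤ p ω)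
    {X : Ω → α} {Y : Ω → γ} {Z : Ω → β} (h : CondIndep p X Z Y) :
    cmi p X Y Z = mi p X Y - mi p X Z := by
  have := ent_triple_of_condIndep hp h
  unfold cmi mi
  linarith

end Markov

/-- under the Markov assumption,
`v(S) = I(X_S; X_0) - I(X_S; X_{L\S})`. -/
theorem statement9 {Ω L 𝒳 β : Type} [Fintype Ω] [Fintype L] [DecidableEq L] [Fintype 𝒳] [Fintype β]
    (p : Ω → ℝ) (hp : IsPMF p) (X : L → Ω → 𝒳) (X0 : Ω → β)
    (hM : ∀ S T : Finset L, Disjoint S T → CondIndep p (XS X S) (XS X T) X0)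
    (S : Finset L) :
    vGame p X X0 S = mi p (XS X S) X0 - mi p (XS X S) (XS X Sᶜ) :=
  cmi_eq_mi_sub_mi_of_condIndep hp.1 (hM S Sᶜ disjoint_compl_right)
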